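/- arXiv:1712.00692 — 5 statements merged into one kernel-verified Lean document; each statement's English description precedes it below -/
import Mathlib

section
/- Let z ∈ ℂ with |Re(z)| ≥ 1/2 and let y ∈ ℝ. Then |z|² / |z² + y²|² ≤ 4. -/
/-!
Factor `z² + y² = (z + y i)(z - y i)`. Since `2z` is the sum of the two factors, `‖z‖` is at most
the larger of their norms, while both norms are at least `|Re z| ≥ 1/2`; for numbers `a, b ≥ 1/2`
one has `max a b ≤ 2 a b`. Hence `‖z‖ ≤ 2 ‖z² + y²‖`.
-/

theorem norm_le_max_norm_add_norm_sub {E : Type*} [SeminormedAddCommGroup E] [NormedSpace ℝ E]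
    (x w : E) : ‖x‖ ≤ max ‖x + w‖ ‖x - w‖ := by
  have h : (2 : ℝ) • x = (x + w) + (x - w) := by rw [two_smul]; abel
  have h2 : 2 * ‖x‖ ≤ ‖x + w‖ + ‖x - w‖ := by
    calc 2 * ‖x‖ = ‖(2 : ℝ) • x‖ := by rw [norm_smul, Real.norm_two]
      _ ≤ ‖x + w‖ + ‖x - w‖ := h ▸ norm_add_le _ _
  linarith [le_max_left ‖x + w‖ ‖x - w‖, le_max_right ‖x + w‖ ‖x - w‖]

theorem max_le_two_mul_mul_of_half_le {a b : ℝ} (ha : 1 / 2 ≤ a) (hb : 1 / 2 ≤ b) :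
    max a b ≤ 2 * (a * b) := by
  have hmin : 1 / 2 ≤ min a b := le_min ha hb
  have hmax : 0 ≤ max a b := le_trans (by norm_num) (le_max_of_le_left ha)
  rw [← min_mul_max a b]
  nlinarith

namespace Complex

theorem abs_re_le_norm_add_of_re_eq_zero (z w : ℂ) (hw : w.re = 0) : |z.re| ≤ ‖z + w‖ := by
  simpa [hw] using abs_re_le_norm (z + w)

theorem sq_add_ofReal_sq (z : ℂ) (y : ℝ) :
    z ^ 2 + (y : ℂ) ^ 2 = (z + y * I) * (z - y * I) := by
  linear_combination (y : ℂ) ^ 2 * I_sq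

theorem norm_le_two_mul_norm_sq_add_ofReal_sq (z : ℂ) (y : ℝ) (hz : 1 / 2 ≤ |z.re|) :
    ‖z‖ ≤ 2 * ‖z ^ 2 + (y : ℂ) ^ 2‖ := by
  have hre : (y * I : ℂ).re = 0 := by simp
  have hplus : 1 / 2 ≤ ‖z + y * I‖ := hz.trans (abs_re_le_norm_add_of_re_eq_zero z _ hre)
  have hminus : 1 / 2 ≤ ‖z - y * I‖ := by
    rw [sub_eq_add_neg]
    exact hz.trans (abs_re_le_norm_add_of_re_eq_zero z _ (by simp [hre]))
  calc ‖z‖ ≤ max ‖z + y * I‖ ‖z - y * I‖ := norm_le_max_norm_add_norm_sub z _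
    _ ≤ 2 * (‖z + y * I‖ * ‖z - y * I‖) := max_le_two_mul_mul_of_half_le hplus hminus
    _ = 2 * ‖z ^ 2 + (y : ℂ) ^ 2‖ := by rw [sq_add_ofReal_sq, norm_mul]

end Complex

theorem stmt_0 (z : ℂ) (y : ℝ) (hz : 1 / 2 ≤ |z.re|) :
    ‖z‖ ^ 2 / ‖z ^ 2 + (y : ℂ) ^ 2‖ ^ 2 ≤ 4 := by
  have h := Complex.norm_le_two_mul_norm_sq_add_ofReal_sq z y hz
  apply div_le_of_le_mul₀ (by positivity) (by norm_num)
  nlinarith [norm_nonneg z]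
end

section
/- Let z ∈ ℂ with |Re(z)| ≥ 1/2 and let y ∈ ℝ. Then (y² + 1) / |z² + y²|² ≤ 16. -/
/- Over ℂ, `z² + y² = (z + yi)(z - yi)`, and each factor has squared modulus at least `(Re z)² ≥ 1/4`.
Writing `u = Im z + y`, `v = Im z - y`, the product of the two squared moduli is therefore at least
`(1/4 + u²)(1/4 + v²) ≥ 1/16 + (u² + v²)/4`, which dominates `(y² + 1)/16` because `u - v = 2y`. -/

open Complex

lemma Complex.sq_add_ofReal_sq_s1 (z : ℂ) (y : ℝ) :
    z ^ 2 + (y : ℂ) ^ 2 = (z + y * I) * (z + ((-y : ℝ) : ℂ) * I) := by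
  push_cast
  ring_nf
  rw [I_sq]
  ring

lemma Complex.normSq_add_ofReal_mul_I (z : ℂ) (y : ℝ) :
    normSq (z + y * I) = z.re ^ 2 + (z.im + y) ^ 2 := by
  simp [normSq_apply, sq]

lemma sq_add_one_le_of_quarter_le_sq {a b y : ℝ} (ha : 1 / 4 ≤ a ^ 2) :
    y ^ 2 + 1 ≤ 16 * ((a ^ 2 + (b + y) ^ 2) * (a ^ 2 + (b - y) ^ 2)) := by
  have hprod : (1 / 4 + (b + y) ^ 2) * (1 / 4 + (b - y) ^ 2)
      ≤ (a ^ 2 + (b + y) ^ 2) * (a ^ 2 + (b - y) ^ 2) := by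
    gcongr
  nlinarith [mul_nonneg (sq_nonneg (b + y)) (sq_nonneg (b - y)), sq_nonneg b]

theorem stmt_1 (z : ℂ) (y : ℝ) (hz : 1 / 2 ≤ |z.re|) :
    (y ^ 2 + 1) / ‖z ^ 2 + (y : ℂ) ^ 2‖ ^ 2 ≤ 16 := by
  have hre : 1 / 4 ≤ z.re ^ 2 := by
    rw [← sq_abs]
    nlinarith
  have hnorm : ‖z ^ 2 + (y : ℂ) ^ 2‖ ^ 2
      = (z.re ^ 2 + (z.im + y) ^ 2) * (z.re ^ 2 + (z.im - y) ^ 2) := by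
    rw [Complex.sq_norm, sq_add_ofReal_sq_s1, normSq_mul, normSq_add_ofReal_mul_I,
      normSq_add_ofReal_mul_I, ← sub_eq_add_neg]
  have hbound := sq_add_one_le_of_quarter_le_sq (b := z.im) (y := y) hre
  rw [← hnorm] at hbound
  rw [div_le_iff₀ (by nlinarith [sq_nonneg y])]
  linarith
end

section
/- Let z ∈ ℂ with |Re(z)| ≥ 1/2 and let y ∈ ℝ. Then |z|⁴ / |z² + y²|² ≤ 32 (y² + 1). -/
/-!
Factor `z² + y² = (z - y i)(z + y i)`. Both factors have real part `Re z`, so each has norm at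
least `|Re z|`, and their sum is `2z`, so the larger one has norm at least `‖z‖`; hence
`‖z² + y²‖ ≥ |Re z| ‖z‖ ≥ ‖z‖ / 2`. Besides, `‖z² + y²‖ ≥ ‖z‖² - y²`. If `‖z‖² ≥ 2y²` the second
bound makes the quotient at most `4`, otherwise the first makes it at most `4‖z‖² < 8y²`.
-/

namespace Complex

lemma abs_re_mul_norm_le_norm_sq_add_sq (z : ℂ) (y : ℝ) :
    |z.re| * ‖z‖ ≤ ‖z ^ 2 + (y : ℂ) ^ 2‖ := by
  set p := ‖z - y * I‖
  set q := ‖z + y * I‖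
  have hfactor : ‖z ^ 2 + (y : ℂ) ^ 2‖ = p * q := by
    rw [← norm_mul]
    congr 1
    linear_combination (y : ℂ) ^ 2 * I_sq
  have hp : |z.re| ≤ p := by simpa using abs_re_le_norm (z - y * I)
  have hq : |z.re| ≤ q := by simpa using abs_re_le_norm (z + y * I)
  have hsum : 2 * ‖z‖ ≤ p + q := by
    calc 2 * ‖z‖ = ‖(z - y * I) + (z + y * I)‖ := by
          rw [show (z - y * I) + (z + y * I) = 2 * z by ring, norm_mul, Complex.norm_two]
      _ ≤ p + q := norm_add_le _ _
  rw [hfactor]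
  nlinarith [abs_nonneg z.re, norm_nonneg (z - y * I), norm_nonneg (z + y * I)]

lemma norm_sq_sub_sq_le_norm_sq_add_sq (z : ℂ) (y : ℝ) :
    ‖z‖ ^ 2 - y ^ 2 ≤ ‖z ^ 2 + (y : ℂ) ^ 2‖ := by
  have hy : ‖(y : ℂ) ^ 2‖ = y ^ 2 := by rw [norm_pow, norm_real, Real.norm_eq_abs, sq_abs]
  rw [← hy, ← norm_pow]
  exact norm_sub_le_norm_add _ _

end Complex

lemma pow_four_div_sq_le_of_half_le_of_sq_sub_le {r d s : ℝ} (hr : 0 < r) (hs : 0 ≤ s)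
    (hd₁ : r / 2 ≤ d) (hd₂ : r ^ 2 - s ≤ d) : r ^ 4 / d ^ 2 ≤ 8 * (s + 1) := by
  have hd : 0 < d := by linarith
  rw [div_le_iff₀ (by positivity)]
  rcases le_or_gt (2 * s) (r ^ 2) with hrs | hrs
  · have : r ^ 2 / 2 ≤ d := by linarith
    nlinarith [mul_self_le_mul_self (by positivity) this]
  · nlinarith [mul_self_le_mul_self (by positivity) hd₁]

theorem stmt_2 (z : ℂ) (y : ℝ) (hz : 1 / 2 ≤ |z.re|) :
    ‖z‖ ^ 4 / ‖z ^ 2 + (y : ℂ) ^ 2‖ ^ 2 ≤ 32 * (y ^ 2 + 1) := by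
  have hnorm : 1 / 2 ≤ ‖z‖ := hz.trans (Complex.abs_re_le_norm z)
  have hhalf : ‖z‖ / 2 ≤ ‖z ^ 2 + (y : ℂ) ^ 2‖ := by
    linarith [mul_le_mul_of_nonneg_right hz (norm_nonneg z),
      Complex.abs_re_mul_norm_le_norm_sq_add_sq z y]
  have hbound := pow_four_div_sq_le_of_half_le_of_sq_sub_le (by linarith) (sq_nonneg y) hhalf
    (Complex.norm_sq_sub_sq_le_norm_sq_add_sq z y)
  linarith [sq_nonneg y]
end

section
/- Let z = a + is with a, s ∈ ℝ, |a| ≥ 1/2, and let y ∈ ℝ. Then |z² + y²|² = (y² − s²)² + a⁴ + 2y²a² + 2a²s², and consequently |z² + y²|² ≥ max((1 + y²)/16, |z|²/4). -/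
/-! Expanding the modulus gives the identity. Each bound then keeps only a few of its nonnegative
terms: `a⁴ + 2a²y² ≥ 1/16 + y²/2` and `a⁴ + 2a²s² ≥ a²/4 + s²/2`, both from `a² ≥ 1/4`. -/

theorem Complex.norm_sq_add_ofReal_sq_sq (z : ℂ) (y : ℝ) :
    ‖z ^ 2 + (y : ℂ) ^ 2‖ ^ 2
      = (y ^ 2 - z.im ^ 2) ^ 2 + z.re ^ 4 + 2 * y ^ 2 * z.re ^ 2 + 2 * z.re ^ 2 * z.im ^ 2 := by
  rw [← normSq_eq_norm_sq, normSq_apply]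
  simp only [add_re, add_im, pow_two, mul_re, mul_im, ofReal_re, ofReal_im]
  ring

theorem max_le_quartic_of_quarter_le_sq {a s y : ℝ} (ha : 1 / 4 ≤ a ^ 2) :
    max ((1 + y ^ 2) / 16) ((a ^ 2 + s ^ 2) / 4)
      ≤ (y ^ 2 - s ^ 2) ^ 2 + a ^ 4 + 2 * y ^ 2 * a ^ 2 + 2 * a ^ 2 * s ^ 2 := by
  have ha4 : a ^ 2 / 4 ≤ a ^ 4 := by nlinarith
  have hy : y ^ 2 / 2 ≤ 2 * y ^ 2 * a ^ 2 := by nlinarith [sq_nonneg y]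
  have hs : s ^ 2 / 2 ≤ 2 * a ^ 2 * s ^ 2 := by nlinarith [sq_nonneg s]
  rw [max_le_iff]
  constructor <;> linarith [sq_nonneg (y ^ 2 - s ^ 2), sq_nonneg y, sq_nonneg s]

theorem stmt_3 (a s y : ℝ) (ha : 1 / 2 ≤ |a|) (z : ℂ) (hz : z = (a : ℂ) + (s : ℂ) * Complex.I) :
    ‖z ^ 2 + (y : ℂ) ^ 2‖ ^ 2
      = (y ^ 2 - s ^ 2) ^ 2 + a ^ 4 + 2 * y ^ 2 * a ^ 2 + 2 * a ^ 2 * s ^ 2 ∧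
    max ((1 + y ^ 2) / 16) (‖z‖ ^ 2 / 4)
      ≤ ‖z ^ 2 + (y : ℂ) ^ 2‖ ^ 2 := by
  have hre : z.re = a := by simp [hz]
  have him : z.im = s := by simp [hz]
  have hnorm : ‖z‖ ^ 2 = a ^ 2 + s ^ 2 := by
    rw [← Complex.normSq_eq_norm_sq, Complex.normSq_apply, hre, him]
    ring
  have ha2 : 1 / 4 ≤ a ^ 2 := by nlinarith [sq_abs a]
  have hid := Complex.norm_sq_add_ofReal_sq_sq z y
  rw [hre, him] at hid
  rw [hid, hnorm]
  exact ⟨rfl, max_le_quartic_of_quarter_le_sq ha2⟩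
end

section
/- Let A be a closed operator on a complex Banach space X such that the open right half-plane ℂ₊ is contained in ρ(−A) (i.e. λ + A is invertible for Re λ > 0), and suppose there exist α ∈ (0,1) and K ≥ 1 with ‖(λ + A)^{−1}‖ ≤ K(Re(λ)^{−α} + 1) for all λ ∈ ℂ₊. Then the closed left half-plane {λ : Re λ ≤ 0} is contained in ρ(A); equivalently, iℝ ∪ ℂ₋ ⊆ ρ(A). -/
theorem stmt_10 (X : Type*) [NormedAddCommGroup X] [NormedSpace ℂ X] [CompleteSpace X]
    (A : X →L[ℂ] X) (α K : ℝ) (hα : α ∈ Set.Ioo (0 : ℝ) 1) (hK : 1 ≤ K)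
    (hres : ∀ lam : ℂ, 0 < lam.re → lam ∈ resolventSet ℂ (-A))
    (hbound : ∀ lam : ℂ, 0 < lam.re →
      ‖resolvent (-A) lam‖ ≤ K * (lam.re ^ (-α) + 1)) :
    ∀ lam : ℂ, lam.re ≤ 0 → lam ∈ resolventSet ℂ A := by
  obtain hX | hX := subsingleton_or_nontrivial X
  · intro lam _
    have : Subsingleton (X →L[ℂ] X) := inferInstance
    rw [spectrum.mem_resolventSet_iff]
    exact isUnit_of_subsingleton _
  -- nontrivial case
  have hnt : Nontrivial (X →L[ℂ] X) := ⟨⟨1, 0, by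
    intro h
    have := congrArg (fun f : X →L[ℂ] X => ‖f‖) h
    simp at this⟩⟩
  -- main claim: any μ with 0 ≤ μ.re is in resolvent set of -A
  have main : ∀ μ : ℂ, 0 ≤ μ.re → IsUnit (algebraMap ℂ (X →L[ℂ] X) μ - (-A)) := by
    intro μ hμ
    rcases hμ.lt_or_eq with hμ | hμ
    · exact spectrum.mem_resolventSet_iff.mp (hres μ hμ)
    · -- Re μ = 0; find small t
      have hμre : μ.re = 0 := hμ.symm
      have hαpos := hα.1
      have hα1 := hα.2
      have hlim : Filter.Tendsto (fun t : ℝ => K * (t ^ (1 - α) + t)) (nhdsWithin 0 (Set.Ioi 0))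
          (nhds (K * ((0:ℝ) ^ (1 - α) + 0))) := by
        apply Filter.Tendsto.mono_left _ nhdsWithin_le_nhds
        exact Filter.Tendsto.mul tendsto_const_nhds
          (Filter.Tendsto.add ((Real.continuousAt_rpow_const 0 (1 - α) (Or.inr (by linarith))).tendsto)
            Filter.tendsto_id)
      rw [Real.zero_rpow (by linarith), add_zero, mul_zero] at hlim
      have hev : ∀ᶠ t in nhdsWithin (0:ℝ) (Set.Ioi 0), K * (t ^ (1 - α) + t) < 1 :=
        hlim.eventually (gt_mem_nhds one_pos)
      obtain ⟨t, ht1, ht0⟩ := (hev.and self_mem_nhdsWithin).exists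
      set ν : ℂ := μ + (t : ℂ) with hνdef
      have hνre : ν.re = t := by simp [hνdef, hμre]
      have hνpos : 0 < ν.re := by rw [hνre]; exact ht0
      have hu : IsUnit (algebraMap ℂ (X →L[ℂ] X) ν - (-A)) :=
        spectrum.mem_resolventSet_iff.mp (hres ν hνpos)
      have hresν : resolvent (-A) ν = ↑hu.unit⁻¹ := by
        rw [resolvent]
        conv_lhs => rw [← hu.unit_spec]
        exact Ring.inverse_unit _
      have hB : ‖(↑hu.unit⁻¹ : X →L[ℂ] X)‖ ≤ K * (t ^ (-α) + 1) := by
        rw [← hresν]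
        simpa [hνre] using hbound ν hνpos
      have hBpos : (0:ℝ) < K * (t ^ (-α) + 1) := by
        have : (0:ℝ) < t ^ (-α) := Real.rpow_pos_of_pos ht0 _
        nlinarith
      have hinvpos : (0:ℝ) < ‖(↑hu.unit⁻¹ : X →L[ℂ] X)‖ := Units.norm_pos _
      have htB : t * (K * (t ^ (-α) + 1)) < 1 := by
        have h1 : t ^ (1 - α) = t * t ^ (-α) := by
          rw [sub_eq_add_neg, Real.rpow_add ht0, Real.rpow_one]
        have : t * (K * (t ^ (-α) + 1)) = K * (t ^ (1 - α) + t) := by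
          rw [h1]; ring
        rw [this]; exact ht1
      have hdist : ‖(algebraMap ℂ (X →L[ℂ] X) μ - (-A)) - ↑hu.unit‖ < ‖(↑hu.unit⁻¹ : X →L[ℂ] X)‖⁻¹ := by
        rw [hu.unit_spec]
        have : (algebraMap ℂ (X →L[ℂ] X) μ - (-A)) - (algebraMap ℂ (X →L[ℂ] X) ν - (-A))
            = algebraMap ℂ (X →L[ℂ] X) (μ - ν) := by
          rw [map_sub]; abel
        rw [this]
        have hn : ‖algebraMap ℂ (X →L[ℂ] X) (μ - ν)‖ = t := by
          rw [norm_algebraMap']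
          simp [hνdef, abs_of_pos ht0]
        rw [hn]
        calc t < (K * (t ^ (-α) + 1))⁻¹ := by
              rw [lt_inv_comm₀ ht0 hBpos]
              nlinarith [mul_inv_cancel₀ ht0.ne']
          _ ≤ ‖(↑hu.unit⁻¹ : X →L[ℂ] X)‖⁻¹ := inv_anti₀ hinvpos hB
      exact (hu.unit.ofNearby _ hdist).isUnit
  intro lam hlam
  rw [spectrum.mem_resolventSet_iff]
  have h := main (-lam) (by simpa using hlam)
  rw [map_neg] at h
  have : -(algebraMap ℂ (X →L[ℂ] X) lam) - (-A) = -(algebraMap ℂ (X →L[ℂ] X) lam - A) := by abel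
  rw [this, IsUnit.neg_iff] at h
  exact h
end
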